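/- arXiv:1804.04941 — 2 statements merged into one kernel-verified Lean document; each statement's English description precedes it below -/
import Mathlib

section
/- Let h : ℝ^n → ℝ^n be continuously differentiable and suppose the symmetrized Jacobian H(y) = (1/2)(Dh(y) + Dh(y)^T) is negative semidefinite for all y. If h(x*) = 0, then for all x, (x - x*)^T h(x) ≤ 0. -/
/-!
Along the segment `s ↦ x* + s (x - x*)` the scalar function `φ s = (x - x*)ᵀ h(x* + s (x - x*))`
has derivative `(x - x*)ᵀ Dh (x - x*)`, the quadratic form of the symmetrized Jacobian at
`x - x*`, hence `φ' ≤ 0`. So `φ` is antitone and `(x - x*)ᵀ h(x) = φ 1 ≤ φ 0 = 0`.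
-/

open Matrix

theorem Matrix.dotProduct_mulVec_eq_symmetrize {ι K : Type*} [Fintype ι] [Field K] [CharZero K]
    (M : Matrix ι ι K) (z : ι → K) :
    z ⬝ᵥ (M *ᵥ z) = z ⬝ᵥ (((1 : K) / 2) • (M + Mᵀ)) *ᵥ z := by
  have htranspose : z ⬝ᵥ (Mᵀ *ᵥ z) = z ⬝ᵥ (M *ᵥ z) := by
    rw [mulVec_transpose, dotProduct_comm, ← dotProduct_mulVec]
  rw [smul_mulVec, add_mulVec, dotProduct_smul, dotProduct_add, htranspose, smul_eq_mul]
  ring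

theorem HasDerivAt.const_dotProduct {ι 𝕜 : Type*} [Fintype ι] [NontriviallyNormedField 𝕜]
    {f : 𝕜 → ι → 𝕜} {f' : ι → 𝕜} {s : 𝕜} (hf : HasDerivAt f f' s) (z : ι → 𝕜) :
    HasDerivAt (fun t => z ⬝ᵥ f t) (z ⬝ᵥ f') s := by
  unfold dotProduct
  exact HasDerivAt.fun_sum fun i _ => (hasDerivAt_pi.mp hf i).const_mul (z i)

theorem dotProduct_sub_map_sub_nonpos {ι : Type*} [Fintype ι] {h : (ι → ℝ) → ι → ℝ}
    {h' : (ι → ℝ) → (ι → ℝ) →L[ℝ] ι → ℝ} (hh : ∀ y, HasFDerivAt h (h' y) y)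
    (hneg : ∀ y z, z ⬝ᵥ h' y z ≤ 0) (x y : ι → ℝ) :
    (x - y) ⬝ᵥ (h x - h y) ≤ 0 := by
  set z := x - y
  set φ : ℝ → ℝ := fun s => z ⬝ᵥ h (y + s • z)
  have hφ : ∀ s, HasDerivAt φ (z ⬝ᵥ h' (y + s • z) z) s := fun s => by
    have hline : HasDerivAt (fun s : ℝ => y + s • z) z s := by
      simpa using ((hasDerivAt_id s).smul_const z).const_add y
    exact ((hh _).comp_hasDerivAt s hline).const_dotProduct z
  have hanti : Antitone φ := antitone_of_deriv_nonpos (fun s => (hφ s).differentiableAt)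
    fun s => (hφ s).deriv ▸ hneg _ z
  have h10 : φ 1 ≤ φ 0 := hanti zero_le_one
  simpa [φ, z, dotProduct_sub] using h10

theorem stmt_8_general (n : ℕ) (h : (Fin n → ℝ) → (Fin n → ℝ))
    (J : (Fin n → ℝ) → Matrix (Fin n) (Fin n) ℝ)
    (hdiff : ∀ y : Fin n → ℝ,
      HasFDerivAt h (LinearMap.toContinuousLinearMap (J y).mulVecLin) y)
    (hnsd : ∀ (y x : Fin n → ℝ),
      dotProduct x ((((1:ℝ)/2) • (J y + (J y).transpose)).mulVec x) ≤ 0)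
    (xstar : Fin n → ℝ) (hx : h xstar = 0) :
    ∀ x : Fin n → ℝ, dotProduct (x - xstar) (h x) ≤ 0 := by
  intro x
  have hquad : ∀ y z, z ⬝ᵥ (J y *ᵥ z) ≤ 0 := fun y z =>
    (dotProduct_mulVec_eq_symmetrize (J y) z).trans_le (hnsd y z)
  simpa [hx] using dotProduct_sub_map_sub_nonpos hdiff hquad x xstar

/-- If `h : ℝⁿ → ℝⁿ` is differentiable with Jacobian `J(y)` whose symmetrization
`(1/2)(J(y) + J(y)ᵀ)` is negative semidefinite everywhere, and `h(x*) = 0`, then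
`(x - x*)ᵀ h(x) ≤ 0` for all `x`. -/
theorem stmt_8 (n : ℕ) (h : (Fin n → ℝ) → (Fin n → ℝ))
    (J : (Fin n → ℝ) → Matrix (Fin n) (Fin n) ℝ)
    (hJcont : Continuous J)
    (hdiff : ∀ y : Fin n → ℝ,
      HasFDerivAt h (LinearMap.toContinuousLinearMap (J y).mulVecLin) y)
    (hnsd : ∀ (y x : Fin n → ℝ),
      dotProduct x ((((1:ℝ)/2) • (J y + (J y).transpose)).mulVec x) ≤ 0)
    (xstar : Fin n → ℝ) (hx : h xstar = 0) :
    ∀ x : Fin n → ℝ, dotProduct (x - xstar) (h x) ≤ 0 :=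
  stmt_8_general n h J hdiff hnsd xstar hx
end

section
/- At any equilibrium of the closed-loop system (17), i.e., any point where the right-hand sides of all equations vanish: (i) η̃* = 0; (ii) ζ̃* = 0; (iii) α̃* = 0 (provided the regressor vector Λ(ζ*) together with the equation Λ^T(ζ*) α̃* - γ ζ̃*_m = 0 and Λ(ζ*) ζ̃*_m = 0 imply both quantities vanish); hence the estimated disturbance equals the true disturbance: Ã(α̂*) ζ* = Ã(α) φ. -/
/-!
With `η̃* = 0`, the first `2s` rows of `A(α̂*)` and `A(α)` agree and are shifts, so
`ζ̃*_{i+1} = G_i S` with `S = rᵀ ζ̃*`. Since `G` vanishes at even positions below `2s - 1`,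
`ζ̃*` vanishes at all odd positions, and the last row collapses to the regressor equation
`Λᵀ (α̂* - α) - γ S = 0`, while the adaptation law gives `Λ S = 0`. The proviso then yields
`α̂* = α` and `S = 0`, so `ζ̃*` vanishes off position `0`, and finally `S = r₀ ζ̃*₀` with
`r₀ ≠ 0` because `r₀` is the constant coefficient of the Hurwitz polynomial `p`.
-/

namespace Polynomial

theorem coeff_zero_ne_zero_of_forall_mem_roots_re_neg {p : ℂ[X]} (hp : p ≠ 0)
    (h : ∀ z ∈ p.roots, z.re < 0) : p.coeff 0 ≠ 0 := by
  intro h0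
  have := h 0 ((mem_roots hp).2 (by rwa [IsRoot, ← coeff_zero_eq_eval_zero]))
  simp at this

theorem coeff_zero_X_pow_add_sum_fin {R : Type*} [Semiring R] {n : ℕ} (hn : 0 < n)
    (c : Fin n → R) : (X ^ n + ∑ j : Fin n, C (c j) * X ^ (j : ℕ)).coeff 0 = c ⟨0, hn⟩ := by
  rw [coeff_add, coeff_X_pow, if_neg hn.ne, zero_add, finsetSum_coeff,
    Finset.sum_eq_single ⟨0, hn⟩]
  · simp
  · intro j _ hj
    rw [coeff_C_mul_X_pow, if_neg fun h => hj (Fin.ext h.symm)]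
  · simp

theorem ne_zero_of_forall_mem_roots_X_pow_add_sum_fin_re_neg {n : ℕ} (hn : 0 < n)
    (c : Fin n → ℂ) (h : ∀ z ∈ (X ^ n + ∑ j : Fin n, C (c j) * X ^ (j : ℕ)).roots, z.re < 0) :
    c ⟨0, hn⟩ ≠ 0 := by
  have hmonic := monic_X_pow_add (degree_sum_fin_lt c)
  rw [← coeff_zero_X_pow_add_sum_fin hn c]
  exact coeff_zero_ne_zero_of_forall_mem_roots_re_neg hmonic.ne_zero h

end Polynomial

open Matrix

theorem eq_zero_of_dotProduct_eq_zero_of_succ_eq_zero {R : Type*} [Semiring R] [NoZeroDivisors R]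
    {n : ℕ} {r x : Fin (n + 1) → R} (hr : r 0 ≠ 0) (hx : ∀ i : Fin n, x i.succ = 0)
    (h : r ⬝ᵥ x = 0) : x = 0 := by
  have hx0 : x 0 = 0 := by
    simpa [dotProduct, Fin.sum_univ_succ, hx, hr] using h
  funext i
  exact Fin.cases hx0 hx i

/-- The paper's `A(b)`: a chain of `2 * s` integrators whose last row feeds back the
coefficients `b` at the odd positions. -/
def internalModel {R : Type*} [Semiring R] (s : ℕ) (b : Fin s → R) :
    Matrix (Fin (2 * s + 1)) (Fin (2 * s + 1)) R :=
  Matrix.of fun i j =>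
    if (i : ℕ) < 2 * s then (if (j : ℕ) = (i : ℕ) + 1 then 1 else 0)
    else if h : (j : ℕ) % 2 = 1 then b ⟨(j : ℕ) / 2, Nat.div_lt_of_lt_mul (by omega)⟩ else 0

def oddIndex {s : ℕ} (k : Fin s) : Fin (2 * s + 1) := Fin.succ ⟨2 * k, by omega⟩

theorem sum_eq_sum_oddIndex {M : Type*} [AddCommMonoid M] {s : ℕ} (f : Fin (2 * s + 1) → M)
    (hf : ∀ j : Fin (2 * s + 1), (j : ℕ) % 2 = 0 → f j = 0) :
    ∑ j, f j = ∑ k, f (oddIndex k) := by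
  refine (Fintype.sum_of_injective oddIndex ?_ _ f ?_ fun _ => rfl).symm
  · intro k l hkl
    simp only [oddIndex, Fin.succ_inj, Fin.mk.injEq] at hkl
    exact Fin.ext (by omega)
  · intro j hj
    refine hf j ?_
    by_contra hodd
    exact hj ⟨⟨(j : ℕ) / 2, by omega⟩, Fin.ext (by simp only [oddIndex, Fin.val_succ]; omega)⟩

section internalModel

variable {R : Type*} {s : ℕ}

theorem internalModel_mulVec_castSucc [Semiring R] (b : Fin s → R) (v : Fin (2 * s + 1) → R)
    (i : Fin (2 * s)) : (internalModel s b *ᵥ v) i.castSucc = v i.succ := by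
  rw [mulVec, dotProduct, Finset.sum_eq_single i.succ (fun j _ hj => ?_) (by simp)]
  · simp [internalModel]
  · have : (j : ℕ) ≠ i + 1 := fun h => hj (Fin.ext h)
    simp [internalModel, this]

theorem internalModel_mulVec_last [Semiring R] (b : Fin s → R) (v : Fin (2 * s + 1) → R) :
    (internalModel s b *ᵥ v) (Fin.last _) = ∑ k, b k * v (oddIndex k) := by
  rw [mulVec, dotProduct, sum_eq_sum_oddIndex]
  · refine Finset.sum_congr rfl fun k _ => ?_
    have hk : (2 * (k : ℕ) + 1) / 2 = k := by omega
    simp [internalModel, oddIndex, hk]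
  · intro j hj
    simp [internalModel, hj]

variable [CommRing R] {bhat b : Fin s → R} {ζ x g r : Fin (2 * s + 1) → R}

theorem internalModel_equilibrium_succ
    (h : ∀ i, ((internalModel s bhat - internalModel s b) *ᵥ ζ) i
      + ((internalModel s b - vecMulVec g r) *ᵥ x) i = 0) (i : Fin (2 * s)) :
    x i.succ = g i.castSucc * (r ⬝ᵥ x) := by
  have hi := h i.castSucc
  simp only [sub_mulVec, Pi.sub_apply, internalModel_mulVec_castSucc, vecMulVec_mulVec,
    Pi.smul_apply, MulOpposite.smul_eq_mul_unop, MulOpposite.unop_op] at hi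
  linear_combination hi

theorem internalModel_equilibrium_last
    (h : ∀ i, ((internalModel s bhat - internalModel s b) *ᵥ ζ) i
      + ((internalModel s b - vecMulVec g r) *ᵥ x) i = 0) :
    ∑ k, (bhat k - b k) * ζ (oddIndex k) + ∑ k, b k * x (oddIndex k) =
      g (Fin.last _) * (r ⬝ᵥ x) := by
  have hl := h (Fin.last _)
  simp only [sub_mulVec, Pi.sub_apply, internalModel_mulVec_last, vecMulVec_mulVec,
    Pi.smul_apply, MulOpposite.smul_eq_mul_unop, MulOpposite.unop_op] at hl
  rw [← Finset.sum_sub_distrib] at hl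
  simp only [sub_mul] at hl ⊢
  linear_combination hl

end internalModel

/-- At any equilibrium of the closed-loop error system (17) (for one node, with
internal model of dimension `m = 2s+1`): (i) `η̃* = 0`; (ii) `ζ̃* = 0`;
(iii) `α̃* = 0` (under the stated proviso on the regressor `Λ(ζ*)`); hence the
estimated disturbance equals the true one: `Ã(α̂*) ζ* = Ã(α) φ`. -/
theorem stmt_13 (s : ℕ) (hs : 1 ≤ s)
    (α αhat : Fin s → ℝ)
    (Amat : (Fin s → ℝ) → Matrix (Fin (2 * s + 1)) (Fin (2 * s + 1)) ℝ)
    (hAmat : ∀ (b : Fin s → ℝ) (i j : Fin (2 * s + 1)),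
      Amat b i j =
        if (i : ℕ) < 2 * s then (if (j : ℕ) = (i : ℕ) + 1 then 1 else 0)
        else if h : (j : ℕ) % 2 = 1 then b ⟨(j : ℕ) / 2, by omega⟩ else 0)
    (r : Fin (2 * s + 1) → ℝ)
    (p : Polynomial ℂ)
    (hp : p = Polynomial.X ^ (2 * s) +
      ∑ j : Fin (2 * s), Polynomial.C ((r j.castSucc : ℂ)) * Polynomial.X ^ (j : ℕ))
    (hHurwitz : ∀ z ∈ p.roots, z.re < 0)
    (γ kα : ℝ) (hkα : 0 < kα)
    (G : Fin (2 * s + 1) → ℝ)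
    (hG : ∀ i : Fin (2 * s + 1),
      G i = if (i : ℕ) = 2 * s - 1 then 1 else if (i : ℕ) = 2 * s then γ else 0)
    (ζ φv ζt : Fin (2 * s + 1) → ℝ) (hζt : ζt = ζ - φv)
    (Λ : Fin s → ℝ)
    (hΛ : ∀ k : Fin s, Λ k = ζ ⟨2 * (k : ℕ) + 1, by omega⟩)
    -- proviso: the regressor equations force both quantities to vanish
    (hPE : ∀ (b : Fin s → ℝ) (c : ℝ),
      ((∑ k, Λ k * b k) - γ * c = 0) → (∀ k, Λ k * c = 0) → b = 0 ∧ c = 0)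
    (ηt Pbar ρ flow μβ dD ω : ℝ)
    -- frequency equation at equilibrium
    (heq2 : Pbar + ρ + flow - μβ - dD * ω = 0)
    -- η̃ equation at equilibrium
    (heq4 : -ηt + Pbar + ρ + flow - μβ - dD * ω = 0)
    -- ζ̃ equation at equilibrium
    (heq5 : ∀ i : Fin (2 * s + 1),
      ((Amat αhat - Amat α).mulVec ζ) i
        + ((Amat α - Matrix.vecMulVec G r).mulVec ζt) i - G i * ηt = 0)
    -- adaptation equation at equilibrium
    (heq6 : ∀ k : Fin s, -kα * Λ k * (ηt + ∑ j, r j * ζt j) = 0) :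
    ηt = 0 ∧ ζt = 0 ∧ αhat = α ∧
      dotProduct (Matrix.vecMul r (1 + Amat αhat)) ζ =
        dotProduct (Matrix.vecMul r (1 + Amat α)) φv := by
  obtain rfl : ηt = 0 := by linarith
  obtain rfl : Amat = internalModel s := funext fun b => Matrix.ext (hAmat b)
  have hrow : ∀ i, ((internalModel s αhat - internalModel s α) *ᵥ ζ) i
      + ((internalModel s α - vecMulVec G r) *ᵥ ζt) i = 0 := by simpa using heq5
  have hΛS : ∀ k, Λ k * (r ⬝ᵥ ζt) = 0 := fun k => by
    simpa [hkα.ne', dotProduct] using heq6 k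
  have hodd : ∀ k, ζt (oddIndex k) = 0 := fun k => by
    rw [oddIndex, internalModel_equilibrium_succ hrow, hG]
    simp only [Fin.val_castSucc]
    rw [if_neg (by omega), if_neg (by omega), zero_mul]
  have hreg : ∑ k, Λ k * (αhat k - α k) - γ * (r ⬝ᵥ ζt) = 0 := by
    have hl := internalModel_equilibrium_last hrow
    rw [hG, if_neg (by rw [Fin.val_last]; omega), if_pos (Fin.val_last _)] at hl
    simp only [hodd, mul_zero, Finset.sum_const_zero, add_zero] at hl
    have hΛ' : ∀ k, Λ k = ζ (oddIndex k) := hΛ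
    simp only [hΛ', mul_comm (ζ _)]
    linear_combination hl
  obtain ⟨hα, hS⟩ := hPE _ _ hreg hΛS
  have hr0 : r 0 ≠ 0 := by
    have := Polynomial.ne_zero_of_forall_mem_roots_X_pow_add_sum_fin_re_neg (by omega) _
      (hp ▸ hHurwitz)
    exact_mod_cast this
  have hζt_zero : ζt = 0 := eq_zero_of_dotProduct_eq_zero_of_succ_eq_zero hr0
    (fun i => by rw [internalModel_equilibrium_succ hrow, hS, mul_zero]) hS
  obtain rfl : αhat = α := funext fun k => sub_eq_zero.1 (congrFun hα k)
  obtain rfl : ζ = φv := sub_eq_zero.1 (by rw [← hζt, hζt_zero])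
  exact ⟨rfl, hζt_zero, rfl, rfl⟩
end
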